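/- arXiv:1402.5295 — 2 statements merged into one kernel-verified Lean document; each statement's English description precedes it below -/
import Mathlib

section
/- The trivial zeros are the only real zeros of the Riemann zeta function: if x is a real number with x ≠ 1 and ζ(x) = 0, then x = -2m for some positive integer m. -/
/-!
For `re s < 0`, put `w = 1 - s`. In the functional equation
`ζ s = 2 (2π)^(-w) Γ(w) cos (π w / 2) ζ w` every factor but the cosine is nonzero because
`re w > 1`, so `ζ s = 0` forces `w` to be an odd integer, i.e. `s = -2m`; and `ζ 0 = -1/2`.
For real `x > 0`, the Dirichlet eta function, which equals `(1 - 2^(1 - s)) ζ s` on `re s > 1` and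
hence on `re s > 0` by analytic continuation, is a series of positive terms
`(2k+1)^(-x) - (2k+2)^(-x)`, so `ζ x ≠ 0` unless `x = 1`.
-/

open Complex Set

noncomputable def dirichletEtaTerm (s : ℂ) (k : ℕ) : ℂ :=
  ((2 * k + 1 : ℕ) : ℂ) ^ (-s) - ((2 * k + 2 : ℕ) : ℂ) ^ (-s)

/-- The alternating series `∑ (-1)^(n+1) n^(-s)` with consecutive terms paired, which makes it
converge absolutely on `0 < re s`. -/
noncomputable def dirichletEta (s : ℂ) : ℂ := ∑' k, dirichletEtaTerm s k

lemma norm_ofReal_cpow_neg_sub_le {s : ℂ} (hs : -1 ≤ s.re) {a b : ℝ} (ha : 0 < a)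
    (hab : a ≤ b) :
    ‖(b : ℂ) ^ (-s) - (a : ℂ) ^ (-s)‖ ≤ ‖s‖ * a ^ (-s.re - 1) * (b - a) := by
  rcases eq_or_ne s 0 with rfl | hs0
  · simp
  have hderiv : ∀ t ∈ Icc a b,
      HasDerivWithinAt (fun y : ℝ => (y : ℂ) ^ (-s)) (-s * (t : ℂ) ^ (-s - 1)) (Icc a b) t :=
    fun t ht => (hasDerivAt_ofReal_cpow_const (ha.trans_le ht.1).ne' (neg_ne_zero.2 hs0))
      |>.hasDerivWithinAt
  have hbound : ∀ t ∈ Icc a b, ‖-s * (t : ℂ) ^ (-s - 1)‖ ≤ ‖s‖ * a ^ (-s.re - 1) := by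
    intro t ht
    rw [norm_mul, norm_neg, norm_cpow_eq_rpow_re_of_pos (ha.trans_le ht.1)]
    gcongr
    refine Real.rpow_le_rpow_of_nonpos ha ht.1 ?_
    simp only [sub_re, neg_re, one_re]
    linarith
  simpa [abs_of_nonneg (sub_nonneg.2 hab)] using
    (convex_Icc a b).norm_image_sub_le_of_norm_hasDerivWithin_le hderiv hbound
      (left_mem_Icc.2 hab) (right_mem_Icc.2 hab)

lemma norm_dirichletEtaTerm_le {s : ℂ} {σ R : ℝ} (hσ : -1 ≤ σ) (hσs : σ ≤ s.re) (hR : ‖s‖ ≤ R)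
    (k : ℕ) : ‖dirichletEtaTerm s k‖ ≤ R * (2 * k + 1 : ℝ) ^ (-σ - 1) := by
  have hk : (1 : ℝ) ≤ 2 * k + 1 := by linarith [k.cast_nonneg (α := ℝ)]
  have hterm : dirichletEtaTerm s k =
      -(((2 * k + 2 : ℝ) : ℂ) ^ (-s) - ((2 * k + 1 : ℝ) : ℂ) ^ (-s)) := by
    simp [dirichletEtaTerm]
  calc ‖dirichletEtaTerm s k‖
      ≤ ‖s‖ * (2 * k + 1 : ℝ) ^ (-s.re - 1) * ((2 * k + 2) - (2 * k + 1)) := by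
        rw [hterm, norm_neg]
        exact norm_ofReal_cpow_neg_sub_le (hσ.trans hσs) (by linarith) (by linarith)
    _ ≤ R * (2 * k + 1 : ℝ) ^ (-σ - 1) := by
      rw [add_sub_add_left_eq_sub, show (2 : ℝ) - 1 = 1 by norm_num, mul_one]
      gcongr
      · exact (norm_nonneg s).trans hR

lemma summable_two_mul_add_one_rpow {p : ℝ} (hp : p < -1) :
    Summable fun k : ℕ => (2 * k + 1 : ℝ) ^ p := by
  have hsucc : Summable fun k : ℕ => ((k + 1 : ℕ) : ℝ) ^ p :=
    (summable_nat_add_iff 1).2 (Real.summable_nat_rpow.2 hp)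
  refine hsucc.of_nonneg_of_le (fun k => by positivity) fun k => ?_
  push_cast
  exact Real.rpow_le_rpow_of_nonpos (by positivity) (by linarith [k.cast_nonneg (α := ℝ)])
    (by linarith)

lemma differentiable_dirichletEtaTerm (k : ℕ) : Differentiable ℂ (dirichletEtaTerm · k) := by
  unfold dirichletEtaTerm
  fun_prop (disch := exact Or.inl (Nat.cast_ne_zero.2 (Nat.succ_ne_zero _)))

lemma differentiableOn_dirichletEta : DifferentiableOn ℂ dirichletEta {s | 0 < s.re} := by
  intro z (hz : 0 < z.re)
  set V : Set ℂ := {s | z.re / 2 < s.re} ∩ Metric.ball 0 (‖z‖ + 1)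
  have hV : IsOpen V := (isOpen_lt continuous_const continuous_re).inter Metric.isOpen_ball
  have hzV : z ∈ V := ⟨show z.re / 2 < z.re by linarith, by simp⟩
  have hdiff : DifferentiableOn ℂ dirichletEta V :=
    differentiableOn_tsum_of_summable_norm
      ((summable_two_mul_add_one_rpow (by linarith)).mul_left _)
      (fun k => (differentiable_dirichletEtaTerm k).differentiableOn) hV
      fun k w hw => norm_dirichletEtaTerm_le (by linarith) hw.1.le (mem_ball_zero_iff.1 hw.2).le k
  exact (hdiff.differentiableAt (hV.mem_nhds hzV)).differentiableWithinAt

lemma dirichletEta_eq_mul_riemannZeta_of_one_lt_re {s : ℂ} (hs : 1 < s.re) :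
    dirichletEta s = (1 - 2 ^ (1 - s)) * riemannZeta s := by
  set g : ℕ → ℂ := fun n => ((n + 1 : ℕ) : ℂ) ^ (-s)
  have hζ : HasSum g (riemannZeta s) := by
    have hsum : Summable g := ((summable_nat_add_iff 1).2
      (Complex.summable_one_div_nat_cpow.2 hs)).congr fun n => by simp [g, cpow_neg]
    convert hsum.hasSum using 1
    simp [zeta_eq_tsum_one_div_nat_add_one_cpow hs, g, cpow_neg]
  have hodd : HasSum (fun k => g (2 * k + 1)) (2 ^ (-s) * riemannZeta s) := by
    refine (hζ.mul_left _).congr_fun fun k => ?_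
    simp only [g]
    rw [show 2 * k + 1 + 1 = 2 * (k + 1) by ring, Nat.cast_mul, natCast_mul_natCast_cpow,
      Nat.cast_ofNat]
  have heven : HasSum (fun k => g (2 * k)) (riemannZeta s - 2 ^ (-s) * riemannZeta s) := by
    have hsum : Summable (fun k => g (2 * k)) :=
      hζ.summable.comp_injective fun a b h => by omega
    have htotal := tsum_even_add_odd hsum hodd.summable
    rw [hodd.tsum_eq, hζ.tsum_eq] at htotal
    rw [← eq_sub_of_add_eq htotal]
    exact hsum.hasSum
  have htwo : (2 : ℂ) ^ (1 - s) = 2 * 2 ^ (-s) := by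
    rw [sub_eq_add_neg, cpow_add _ _ two_ne_zero, cpow_one]
  calc dirichletEta s = ∑' k, (g (2 * k) - g (2 * k + 1)) := rfl
    _ = (1 - 2 ^ (1 - s)) * riemannZeta s := by
      rw [(heven.sub hodd).tsum_eq, htwo]
      ring

lemma dirichletEta_eq_mul_riemannZeta {s : ℂ} (hs : 0 < s.re) (hs1 : s ≠ 1) :
    dirichletEta s = (1 - 2 ^ (1 - s)) * riemannZeta s := by
  have hU : IsOpen {s : ℂ | 0 < s.re} := isOpen_lt continuous_const continuous_re
  -- Multiplying by `s - 1` removes the pole, so the identity theorem applies on the whole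
  -- (convex) half-plane.
  have hcompleted : EqOn (fun s => (s - 1) * dirichletEta s)
      (fun s => (1 - 2 ^ (1 - s)) * riemannZeta₁ s) {s | 0 < s.re} := by
    refine AnalyticOnNhd.eqOn_of_preconnected_of_eventuallyEq (z₀ := 2)
      (((differentiableOn_id.sub_const 1).mul differentiableOn_dirichletEta).analyticOnNhd hU)
      ((by fun_prop : Differentiable ℂ _).differentiableOn.analyticOnNhd hU)
      (convex_halfSpace_re_gt 0).isPreconnected (by simp) ?_
    filter_upwards [(isOpen_lt continuous_const continuous_re).mem_nhds
      (show (1 : ℝ) < (2 : ℂ).re by simp)] with w hw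
    have hw1 : w - 1 ≠ 0 := sub_ne_zero.2 fun h => by simp [h] at hw
    rw [dirichletEta_eq_mul_riemannZeta_of_one_lt_re hw,
      riemannZeta_eq_inv_sub_mul (sub_ne_zero.1 hw1)]
    field_simp
  have hs1' : s - 1 ≠ 0 := sub_ne_zero.2 hs1
  rw [riemannZeta_eq_inv_sub_mul hs1, ← mul_right_inj' hs1']
  refine (hcompleted hs).trans ?_
  field_simp

lemma re_dirichletEtaTerm_ofReal_pos {x : ℝ} (hx : 0 < x) (k : ℕ) :
    0 < (dirichletEtaTerm x k).re := by
  have hcast (n : ℕ) : ((n : ℂ) ^ (-(x : ℂ))).re = (n : ℝ) ^ (-x) := by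
    rw [← ofReal_natCast, ← ofReal_neg, ← ofReal_cpow n.cast_nonneg, ofReal_re]
  rw [dirichletEtaTerm, sub_re, hcast, hcast, sub_pos]
  exact Real.rpow_lt_rpow_of_neg (by positivity) (by push_cast; linarith) (neg_lt_zero.2 hx)

lemma re_dirichletEta_ofReal_pos {x : ℝ} (hx : 0 < x) : 0 < (dirichletEta x).re := by
  have hsum : Summable (dirichletEtaTerm x) :=
    .of_norm_bounded ((summable_two_mul_add_one_rpow (by linarith)).mul_left ‖(x : ℂ)‖)
      (norm_dirichletEtaTerm_le (σ := x) (by linarith) le_rfl le_rfl)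
  rw [dirichletEta, re_tsum hsum]
  exact (hasSum_re hsum.hasSum).summable.tsum_pos
    (fun k => (re_dirichletEtaTerm_ofReal_pos hx k).le) 0 (re_dirichletEtaTerm_ofReal_pos hx 0)

lemma riemannZeta_ofReal_ne_zero_of_pos {x : ℝ} (hx : 0 < x) (hx1 : x ≠ 1) :
    riemannZeta x ≠ 0 := by
  intro hζ
  have hη := dirichletEta_eq_mul_riemannZeta (s := x) (by simpa using hx) (by exact_mod_cast hx1)
  rw [hζ, mul_zero] at hη
  simpa [hη] using re_dirichletEta_ofReal_pos hx

lemma exists_eq_neg_two_mul_of_riemannZeta_eq_zero {s : ℂ} (hs : s.re < 0)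
    (hζ : riemannZeta s = 0) : ∃ m : ℕ, 0 < m ∧ s = -(2 * m) := by
  set w := 1 - s
  have hw : 1 < w.re := by simp only [sub_re, one_re, w]; linarith
  have hfe := riemannZeta_one_sub (s := w)
    (fun n h => by have := congrArg re h; simp only [neg_re, natCast_re] at this; linarith [n.cast_nonneg (α := ℝ)])
    (fun h => by simp [h] at hw)
  rw [show 1 - w = s by ring, hζ, eq_comm] at hfe
  have hcos : cos (Real.pi * w / 2) = 0 := by
    simpa [riemannZeta_ne_zero_of_one_lt_re hw, Gamma_ne_zero_of_re_pos (by linarith : 0 < w.re),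
      cpow_eq_zero_iff, Real.pi_ne_zero] using hfe
  obtain ⟨k, hk⟩ := cos_eq_zero_iff.1 hcos
  have hsk : s = -(2 * k) := by
    have hw' : w = 2 * k + 1 := by
      have hπ : (Real.pi : ℂ) ≠ 0 := ofReal_ne_zero.2 Real.pi_ne_zero
      field_simp at hk
      linear_combination hk
    linear_combination -hw'
  have hk0 : 0 < k := by
    rw [hsk] at hs
    simpa using hs
  lift k to ℕ using hk0.le
  exact ⟨k, by exact_mod_cast hk0, by simpa using hsk⟩

/-- The trivial zeros are the only real zeros of the Riemann zeta function:
a real zero `x ≠ 1` of `ζ` is of the form `-2m` for some positive integer `m`. -/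
theorem real_zeta_zero_is_trivial (x : ℝ) (hx : x ≠ 1)
    (hzero : riemannZeta (x : ℂ) = 0) :
    ∃ m : ℕ, 0 < m ∧ x = -(2 * m) := by
  rcases lt_trichotomy x 0 with hneg | rfl | hpos
  · obtain ⟨m, hm, hxm⟩ :=
      exists_eq_neg_two_mul_of_riemannZeta_eq_zero (by simpa using hneg) hzero
    exact ⟨m, hm, by exact_mod_cast hxm⟩
  · norm_num [riemannZeta_zero] at hzero
  · exact absurd hzero (riemannZeta_ofReal_ne_zero_of_pos hpos hx)
end

section
/- Convergence of Taylor coefficients of partial products to those of the infinite product: let z : ℕ → ℂ be a sequence of nonzero complex numbers with ∑_{k} 1/|z_k| < ∞, and for each N and n let a_{N,n} be the coefficient of z^n in the polynomial ∏_{k=1}^N (1 - z/z_k), i.e. a_{N,n} = (-1)^n ∑_{S ⊆ {1,…,N}, |S| = n} ∏_{k ∈ S} 1/z_k. Then for each fixed n, the family (∏_{k ∈ S} 1/z_k) indexed by the finite subsets S of ℕ of cardinality n is summable, and a_{N,n} converges as N → ∞ to a_n = (-1)^n times its sum. -/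
/-!
Since `∑ ‖1 / z k‖ < ∞`, the family `S ↦ ∏ k ∈ S, 1 / z k` over all finite `S ⊆ ℕ` is summable
(its finite partial sums are dominated by `∏ (1 + ‖1 / z k‖) ≤ exp ∑ ‖1 / z k‖`), hence so is its
restriction to sets of cardinality `n`; the coefficient `a N n` is, up to sign, the partial sum
of that restriction over the subsets of `range N`, which exhaust all finite sets.
-/

open Filter Finset

theorem tendsto_sum_powersetCard_range_of_hasSum {M : Type*} [AddCommMonoid M]
    [TopologicalSpace M] {φ : Finset ℕ → M} {n : ℕ} {a : M}
    (h : HasSum (fun S : {S : Finset ℕ // S.card = n} => φ S) a) :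
    Tendsto (fun N => ∑ S ∈ (range N).powersetCard n, φ S) atTop (nhds a) := by
  have hexhaust : Tendsto (fun N => ((range N).powersetCard n).subtype (·.card = n)) atTop atTop := by
    refine tendsto_atTop_finset_of_monotone
      (fun N M hNM => subtype_mono (powersetCard_mono (range_subset_range.mpr hNM))) fun S => ?_
    obtain ⟨N, hN⟩ := (S : Finset ℕ).exists_nat_subset_range
    exact ⟨N, mem_subtype.mpr (mem_powersetCard.mpr ⟨hN, S.2⟩)⟩
  exact (h.comp hexhaust).congr fun N =>
    (sum_subtype_of_mem (s := (range N).powersetCard n) φ fun S hS => (mem_powersetCard.mp hS).2)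

theorem partial_product_coeff_tendsto_general (z : ℕ → ℂ)
    (hsum : Summable fun k => 1 / ‖z k‖) (n : ℕ) :
    Summable (fun S : {S : Finset ℕ // S.card = n} => ∏ k ∈ (S : Finset ℕ), (z k)⁻¹) ∧
    Tendsto
      (fun N : ℕ =>
        (-1 : ℂ) ^ n * ∑ S ∈ (Finset.range N).powersetCard n, ∏ k ∈ S, (z k)⁻¹)
      atTop
      (nhds ((-1 : ℂ) ^ n *
        ∑' S : {S : Finset ℕ // S.card = n}, ∏ k ∈ (S : Finset ℕ), (z k)⁻¹)) := by
  have hinv : Summable fun k => ‖(z k)⁻¹‖ := by simpa only [norm_inv, one_div] using hsum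
  have hS := (summable_finsetProd_of_summable_norm hinv).subtype {S | S.card = n}
  exact ⟨hS, (tendsto_sum_powersetCard_range_of_hasSum (φ := (∏ k ∈ ·, (z k)⁻¹))
    hS.hasSum).const_mul _⟩

/-- Let `z : ℕ → ℂ` be nonzero with `∑ 1/|z k| < ∞`, and let
`a N n = (-1)^n ∑_{S ⊆ {0,…,N-1}, |S| = n} ∏_{k ∈ S} 1/z k` be the coefficient
of `X^n` in `∏_{k < N} (1 - X / z k)`.  Then for each fixed `n` the family
`S ↦ ∏_{k ∈ S} 1/z k` over finite `S ⊆ ℕ` with `|S| = n` is summable, and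
`a N n` converges as `N → ∞` to `(-1)^n` times its sum. -/
theorem partial_product_coeff_tendsto (z : ℕ → ℂ) (hz : ∀ k, z k ≠ 0)
    (hsum : Summable fun k => 1 / ‖z k‖) (n : ℕ) :
    Summable (fun S : {S : Finset ℕ // S.card = n} => ∏ k ∈ (S : Finset ℕ), (z k)⁻¹) ∧
    Tendsto
      (fun N : ℕ =>
        (-1 : ℂ) ^ n * ∑ S ∈ (Finset.range N).powersetCard n, ∏ k ∈ S, (z k)⁻¹)
      atTop
      (nhds ((-1 : ℂ) ^ n *
        ∑' S : {S : Finset ℕ // S.card = n}, ∏ k ∈ (S : Finset ℕ), (z k)⁻¹)) :=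
  partial_product_coeff_tendsto_general z hsum n
end
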